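/- arXiv:2505.22378 — 2 statements merged into one kernel-verified Lean document; each statement's English description precedes it below -/
import Mathlib

section
/- Tabuada-type minimum inter-event time bound: let φ : [0, T) → [0,∞) be the maximal solution of φ̇ = L·(1 + φ)², φ(0) = 0, for L > 0. Then φ(t) = L t / (1 - L t) for t < 1/L, and the first time at which φ reaches the value σ > 0 equals τ = σ / (L·(1 + σ)). Consequently, any absolutely continuous function ψ with ψ(0) = 0 and ψ̇(t) ≤ L·(1 + ψ(t))² satisfies ψ(t) ≤ σ for all t ∈ [0, σ/(L(1+σ))]. -/
lemma tabuada_hasDerivAt_phi (M t : ℝ) (h : M * t < 1) :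
    HasDerivAt (fun s => M * s / (1 - M * s)) (M * (1 + M * t / (1 - M * t))^2) t := by
  have hpos : 0 < 1 - M * t := by linarith
  have hne : 1 - M * t ≠ 0 := ne_of_gt hpos
  have h1 : HasDerivAt (fun s : ℝ => M * s) M t := by
    simpa using (hasDerivAt_id t).const_mul M
  have h2 : HasDerivAt (fun s : ℝ => 1 - M * s) (-M) t := by
    simpa using h1.const_sub 1
  have h3 := h1.div h2 hne
  refine h3.congr_deriv ?_
  symm
  have e : (1:ℝ) + M * t / (1 - M * t) = 1 / (1 - M * t) := by
    rw [eq_div_iff hne, add_mul, div_mul_cancel₀ _ hne]; ring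
  rw [e, div_pow, one_pow, eq_div_iff (pow_ne_zero 2 hne), mul_assoc, one_div,
    inv_mul_cancel₀ (pow_ne_zero 2 hne)]
  ring

/-- Tabuada-type minimum inter-event time bound: the solution of `φ̇ = L(1+φ)²`, `φ(0)=0` is
`φ(t) = Lt/(1-Lt)`; it first reaches the value `σ` at `τ = σ/(L(1+σ))`; and any function `ψ`
with `ψ(0)=0` and `ψ̇ ≤ L(1+ψ)²` satisfies `ψ ≤ σ` on `[0, τ]` (comparison lemma). -/
theorem tabuada_min_inter_event_time (L σ : ℝ) (hL : 0 < L) (hσ : 0 < σ) :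
    (∀ t ∈ Set.Ico (0:ℝ) (1/L),
      HasDerivAt (fun s => L * s / (1 - L * s)) (L * (1 + L * t / (1 - L * t))^2) t) ∧
    (L * (0:ℝ) / (1 - L * 0) = 0) ∧
    (L * (σ / (L * (1 + σ))) / (1 - L * (σ / (L * (1 + σ)))) = σ) ∧
    (∀ t ∈ Set.Ico (0:ℝ) (σ / (L * (1 + σ))), L * t / (1 - L * t) < σ) ∧
    (∀ (ψ ψ' : ℝ → ℝ), ψ 0 = 0 →
      ContinuousOn ψ (Set.Icc 0 (σ / (L * (1 + σ)))) →
      (∀ t ∈ Set.Ico (0:ℝ) (σ / (L * (1 + σ))), HasDerivWithinAt ψ (ψ' t) (Set.Ici t) t) →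
      (∀ t ∈ Set.Ico (0:ℝ) (σ / (L * (1 + σ))), ψ' t ≤ L * (1 + ψ t)^2) →
      ∀ t ∈ Set.Icc (0:ℝ) (σ / (L * (1 + σ))), ψ t ≤ σ) := by
  have hσ1 : 0 < 1 + σ := by linarith
  set τ : ℝ := σ / (L * (1 + σ)) with hτdef
  have hτpos : 0 < τ := div_pos hσ (by positivity)
  have hLτ : L * τ = σ / (1 + σ) := by
    rw [hτdef]; field_simp
  have hLτlt : L * τ < 1 := by
    rw [hLτ, div_lt_one hσ1]; linarith
  refine ⟨?_, ?_, ?_, ?_, ?_⟩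
  · intro t ht
    exact tabuada_hasDerivAt_phi L t ((lt_div_iff₀' hL).mp ht.2)
  · simp
  · show L * τ / (1 - L * τ) = σ
    have h2 : 1 - σ / (1 + σ) = 1 / (1 + σ) := by field_simp; ring
    rw [hLτ, h2]
    rw [div_div_eq_mul_div, div_one, div_mul_cancel₀ σ (ne_of_gt hσ1)]
  · intro t ht
    have h0 : 0 ≤ t := ht.1
    have hlt : L * t < L * τ := by nlinarith [ht.2]
    have h1 : L * t < 1 := lt_trans hlt hLτlt
    have hpos : 0 < 1 - L * t := by linarith
    rw [div_lt_iff₀ hpos]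
    rw [hLτ] at hlt
    rw [lt_div_iff₀ hσ1] at hlt
    nlinarith
  · intro ψ ψ' hψ0 hψc hψ' hbound t ht
    -- it suffices to show ψ t ≤ σ + δ for all δ > 0
    refine le_of_forall_pos_le_add fun δ hδ => ?_
    set M : ℝ := (σ + δ) / ((1 + σ + δ) * τ) with hMdef
    have hM0 : 0 < M := by positivity
    have hMτ : M * τ = (σ + δ) / (1 + σ + δ) := by
      rw [hMdef]; field_simp
    have hMτlt : M * τ < 1 := by
      rw [hMτ, div_lt_one (by linarith)]; linarith
    have hLM : L < M := by
      have h1 : L * τ < M * τ := by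
        rw [hLτ, hMτ, div_lt_div_iff₀ hσ1 (by linarith)]
        nlinarith
      exact lt_of_mul_lt_mul_right h1 hτpos.le
    set B : ℝ → ℝ := fun s => M * s / (1 - M * s) with hBdef
    have hBd : ∀ x ∈ Set.Ico (0:ℝ) τ,
        HasDerivWithinAt B (M * (1 + B x)^2) (Set.Ici x) x := by
      intro x hx
      have : M * x < 1 := by
        have : M * x < M * τ := by nlinarith [hx.2]
        linarith
      exact (tabuada_hasDerivAt_phi M x this).hasDerivWithinAt
    have hBc : ContinuousOn B (Set.Icc 0 τ) := by
      intro x hx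
      have hx1 : M * x < 1 := by
        have : M * x ≤ M * τ := by nlinarith [hx.2]
        linarith
      exact (tabuada_hasDerivAt_phi M x hx1).continuousAt.continuousWithinAt
    have key : ∀ ⦃x⦄, x ∈ Set.Icc (0:ℝ) τ → ψ x ≤ B x := by
      refine image_le_of_deriv_right_lt_deriv_boundary' hψc hψ' ?_ hBc hBd ?_
      · rw [hψ0, hBdef]; simp
      · intro x hx heq
        have hx1 : M * x < 1 := by
          have : M * x < M * τ := by nlinarith [hx.2]
          linarith
        have hBx : 0 ≤ B x := by
          rw [hBdef]
          exact div_nonneg (mul_nonneg hM0.le hx.1) (by linarith)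
        have h1 : ψ' x ≤ L * (1 + ψ x)^2 := hbound x hx
        have hb1 : (1:ℝ) ≤ (1 + B x)^2 := by nlinarith [hBx]
        have h2 : L * (1 + B x)^2 < M * (1 + B x)^2 := by nlinarith [hb1, hLM]
        rw [heq] at h1
        linarith
    have h1 : ψ t ≤ B t := key ht
    have h2 : B t ≤ B τ := by
      have ht1 : M * t < 1 := by
        have : M * t ≤ M * τ := by nlinarith [ht.2]
        linarith
      rw [hBdef]
      have hp1 : 0 < 1 - M * t := by linarith
      have hp2 : 0 < 1 - M * τ := by linarith
      rw [div_le_div_iff₀ hp1 hp2]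
      nlinarith [ht.1, ht.2]
    have h3 : B τ = σ + δ := by
      rw [hBdef]
      simp only
      rw [hMτ]
      have hne : (1:ℝ) + σ + δ ≠ 0 := by positivity
      field_simp
      ring
    linarith [h3 ▸ h2, h1]
end

section
/- Quantized containability lower bound: consider the scalar discrete-time system x_{k+1} = a·x_k + u_k with |a| > 1, where at each step the controller receives only one of N symbols from the sensor and then applies an input depending only on the symbol history. If at step k the state is only known to lie in a set of Lebesgue measure L > 0, then after applying the dynamics and any symbol-dependent input, the state is only known to lie (for at least one symbol) in a set of measure at least |a|·L/N. Consequently, if N < |a|, the diameter of the uncertainty set grows unboundedly and the state cannot be confined to any bounded set for all initial conditions in a set of positive measure. -/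
open MeasureTheory
open scoped ENNReal

lemma volume_image_affine (a : ℝ) (ha : a ≠ 0) (u : ℝ) (P : Set ℝ) :
    volume ((fun x => a * x + u) '' P) = ENNReal.ofReal |a| * volume P := by
  have h1 : (fun x => a * x + u) '' P = (fun y => y + u) '' ((fun x => a * x) '' P) := by
    rw [Set.image_image]
  have h2 : (fun x => a * x) '' P = (fun x => a⁻¹ * x) ⁻¹' P := by
    ext x
    constructor
    · rintro ⟨y, hy, rfl⟩; simpa [inv_mul_cancel_left₀ ha] using hy
    · intro hx; exact ⟨a⁻¹ * x, hx, by field_simp⟩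
  rw [h1, h2]
  have h3 : (fun y : ℝ => y + u) '' ((fun x => a⁻¹ * x) ⁻¹' P)
      = (fun y : ℝ => y + (-u)) ⁻¹' ((fun x => a⁻¹ * x) ⁻¹' P) := by
    ext x
    constructor
    · rintro ⟨y, hy, rfl⟩; simpa using hy
    · intro hx; exact ⟨x + -u, hx, by ring⟩
  rw [h3]
  have h4 : volume ((fun y : ℝ => y + (-u)) ⁻¹' ((fun x => a⁻¹ * x) ⁻¹' P))
      = volume ((fun x : ℝ => a⁻¹ * x) ⁻¹' P) := by
    exact measure_preimage_add_right volume (-u) _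
  rw [h4, Real.volume_preimage_mul_left (inv_ne_zero ha), inv_inv]

/-- Quantized containability lower bound for the scalar system `x⁺ = a·x + u` with an `|a| > 1`
and an `N`-symbol channel: (i) if the state is only known to lie in a set of Lebesgue measure
`L > 0`, then for any measurable partition of this set into `N` pieces and any symbol-dependent
control inputs, for at least one symbol the resulting uncertainty set
`(fun x => a·x + u i) '' Pᵢ` has measure at least `|a|·L/N`; (ii) consequently, if `N < |a|`,
the measures of the iterated uncertainty sets grow geometrically and their diameters grow
unboundedly, so the state cannot be confined to any bounded set. -/
theorem quantized_containability_lower_bound (a : ℝ) (ha : 1 < |a|) (N : ℕ) (hN : 0 < N) :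
    (∀ (S : Set ℝ) (L : ℝ), 0 < L → MeasurableSet S → volume S = ENNReal.ofReal L →
      ∀ P : Fin N → Set ℝ, (∀ i, MeasurableSet (P i)) → (⋃ i, P i) = S →
      ∀ u : Fin N → ℝ,
        ∃ i, ENNReal.ofReal (|a| * L / N) ≤ volume ((fun x => a * x + u i) '' P i)) ∧
    ((N : ℝ) < |a| →
      ∀ S : ℕ → Set ℝ, 0 < volume (S 0) →
        (∀ k, ENNReal.ofReal (|a| / N) * volume (S k) ≤ volume (S (k + 1))) →
        Filter.Tendsto (fun k => volume (S k)) Filter.atTop (nhds ⊤) ∧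
        Filter.Tendsto (fun k => EMetric.diam (S k)) Filter.atTop (nhds ⊤)) := by
  have ha0 : a ≠ 0 := fun h => by simp [h] at ha; linarith
  constructor
  · intro S L hL _hS hvol P hPm hPU u
    -- some piece has measure ≥ L/N
    have hsum : ENNReal.ofReal L ≤ ∑ i, volume (P i) := by
      rw [← hvol, ← hPU]
      exact measure_iUnion_fintype_le volume P
    have hconst : ∑ _i : Fin N, ENNReal.ofReal (L / N) = ENNReal.ofReal L := by
      rw [Finset.sum_const, Finset.card_univ, Fintype.card_fin, nsmul_eq_mul,
        ← ENNReal.ofReal_natCast, ← ENNReal.ofReal_mul (by positivity),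
        mul_div_cancel₀ _ (by exact_mod_cast hN.ne' : (N : ℝ) ≠ 0)]
    have hexists : ∃ i : Fin N, ENNReal.ofReal (L / N) ≤ volume (P i) := by
      have : Nonempty (Fin N) := Fin.pos_iff_nonempty.mp hN
      have hne : (Finset.univ : Finset (Fin N)).Nonempty := Finset.univ_nonempty
      by_contra h
      push_neg at h
      have hfin : ∀ i, volume (P i) ≠ ⊤ := fun i => ((h i).trans ENNReal.ofReal_lt_top).ne
      have hsumfin : ∑ i, volume (P i) ≠ ⊤ := by
        exact (ENNReal.sum_lt_top.mpr fun i _ => (hfin i).lt_top).ne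
      have hsumlt : ∑ i, (volume (P i)).toReal < ∑ _i : Fin N, (L / N) := by
        apply Finset.sum_lt_sum_of_nonempty hne
        intro i _
        have := (ENNReal.toReal_lt_toReal (hfin i) ENNReal.ofReal_ne_top).mpr (h i)
        rwa [ENNReal.toReal_ofReal (by positivity)] at this
      have hconstR : ∑ _i : Fin N, (L / N) = L := by
        rw [Finset.sum_const, Finset.card_univ, Fintype.card_fin, nsmul_eq_mul,
          mul_div_cancel₀ _ (by exact_mod_cast hN.ne' : (N : ℝ) ≠ 0)]
      have hge : L ≤ ∑ i, (volume (P i)).toReal := by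
        have := ENNReal.toReal_mono hsumfin hsum
        rwa [ENNReal.toReal_ofReal hL.le, ENNReal.toReal_sum (fun i _ => hfin i)] at this
      rw [hconstR] at hsumlt
      linarith
    obtain ⟨i, hi⟩ := hexists
    refine ⟨i, ?_⟩
    rw [volume_image_affine a ha0 (u i) (P i)]
    calc ENNReal.ofReal (|a| * L / N) = ENNReal.ofReal |a| * ENNReal.ofReal (L / N) := by
          rw [← ENNReal.ofReal_mul (abs_nonneg a), mul_div_assoc]
      _ ≤ ENNReal.ofReal |a| * volume (P i) := by
          exact mul_le_mul_right hi _
  · intro hNa S h0 hrec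
    set c : ℝ≥0∞ := ENNReal.ofReal (|a| / N) with hc
    have hr1 : 1 < |a| / N := by
      rw [lt_div_iff₀ (by exact_mod_cast hN)]
      simpa using hNa
    have key : ∀ k, c ^ k * volume (S 0) ≤ volume (S k) := by
      intro k
      induction k with
      | zero => simp
      | succ n ih =>
        calc c ^ (n + 1) * volume (S 0) = c * (c ^ n * volume (S 0)) := by ring
          _ ≤ c * volume (S n) := mul_le_mul_right ih _
          _ ≤ volume (S (n + 1)) := hrec n
    have hpow : Filter.Tendsto (fun k : ℕ => c ^ k) Filter.atTop (nhds ⊤) := by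
      have : ∀ k : ℕ, c ^ k = ENNReal.ofReal ((|a| / N) ^ k) := by
        intro k
        rw [hc, ← ENNReal.ofReal_pow (by positivity)]
      simp only [this]
      exact ENNReal.tendsto_ofReal_nhds_top.2 (tendsto_pow_atTop_atTop_of_one_lt hr1)
    have hmul : Filter.Tendsto (fun k : ℕ => c ^ k * volume (S 0)) Filter.atTop (nhds ⊤) := by
      have := ENNReal.Tendsto.mul_const (b := volume (S 0)) hpow (Or.inl (by simp))
      simpa [ENNReal.top_mul h0.ne'] using this
    have htend : Filter.Tendsto (fun k => volume (S k)) Filter.atTop (nhds ⊤) :=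
      tendsto_nhds_top_mono hmul (Filter.Eventually.of_forall key)
    refine ⟨htend, ?_⟩
    have hdiam : ∀ k, volume (S k) ≤ EMetric.diam (S k) := fun k => Real.volume_le_diam _
    exact tendsto_nhds_top_mono htend (Filter.Eventually.of_forall hdiam)
end
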